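/- Let S be a finite semigroup satisfying x((ax)^ω(bx)^ω)^ω = x((bx)^ω(ax)^ω)^ω for all a, b, x ∈ S. Then S satisfies ((sxt)^ω(syt)^ω)^ω = ((syt)^ω(sxt)^ω)^ω for all s, x, y, t ∈ S. -/
import Mathlib


/-- iterated power in a semigroup: `pw x n = x^(n+1)` -/
def pw {S : Type*} [Semigroup S] (x : S) : ℕ → S
  | 0 => x
  | n + 1 => pw x n * x

lemma pw_add {S : Type*} [Semigroup S] (z : S) (a b : ℕ) :
    pw z (a + b + 1) = pw z a * pw z b := by
  induction b with
  | zero => rfl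
  | succ b ih =>
    have : a + (b + 1) + 1 = (a + b + 1) + 1 := by ring
    rw [this, pw, ih, pw, mul_assoc]

lemma pw_stable {S : Type*} [Semigroup S] (z : S) (n : ℕ)
    (h : pw z n * pw z n = pw z n) (k : ℕ) :
    pw z (n + k * (n + 1)) = pw z n := by
  induction k with
  | zero => simp
  | succ k ih =>
    have : n + (k + 1) * (n + 1) = (n + k * (n + 1)) + n + 1 := by ring
    rw [this, pw_add, ih, h]

lemma pw_conj {S : Type*} [Semigroup S] (P Q u : S) (h : P * u = u * Q) :
    ∀ n, pw P n * u = u * pw Q n := by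
  intro n
  induction n with
  | zero => exact h
  | succ n ih =>
    show pw P n * P * u = u * (pw Q n * Q)
    rw [mul_assoc, h, ← mul_assoc, ih, mul_assoc]

lemma pw_last {S : Type*} [Semigroup S] (a b : S) :
    ∀ n, ∃ c, pw (a * b) n = c * b := by
  intro n
  induction n with
  | zero => exact ⟨a, rfl⟩
  | succ n ih =>
    obtain ⟨c, hc⟩ := ih
    exact ⟨c * b * a, by simp [pw, hc, mul_assoc]⟩

lemma pw_first {S : Type*} [Semigroup S] (a b : S) :
    ∀ n, ∃ c, pw (a * b) n = a * c := by
  intro n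
  induction n with
  | zero => exact ⟨b, rfl⟩
  | succ n ih =>
    obtain ⟨c, hc⟩ := ih
    exact ⟨c * (a * b), by rw [pw, hc, mul_assoc]⟩

theorem stmt_8 {S : Type*} [Semigroup S] [Finite S] (ω : S → S)
    (hωpow : ∀ x : S, ∃ n : ℕ, ω x = pw x n)
    (hωid : ∀ x : S, ω x * ω x = ω x)
    (hωuniq : ∀ (x : S) (n : ℕ), pw x n * pw x n = pw x n → pw x n = ω x)
    (h : ∀ a b x : S,
      x * ω (ω (a * x) * ω (b * x)) = x * ω (ω (b * x) * ω (a * x))) :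
    ∀ s x y t : S,
      ω (ω (s * x * t) * ω (s * y * t)) = ω (ω (s * y * t) * ω (s * x * t)) := by
  -- common idempotent exponent
  have common : ∀ P Q : S, ∃ N, pw P N = ω P ∧ pw Q N = ω Q := by
    intro P Q
    obtain ⟨n, hn⟩ := hωpow P
    obtain ⟨m, hm⟩ := hωpow Q
    have h1 : pw P n * pw P n = pw P n := by rw [← hn]; exact hωid P
    have h2 : pw Q m * pw Q m = pw Q m := by rw [← hm]; exact hωid Q
    refine ⟨n + m * (n + 1), ?_, ?_⟩
    · rw [pw_stable P n h1, hn]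
    · have : n + m * (n + 1) = m + n * (m + 1) := by ring
      rw [this, pw_stable Q m h2, hm]
  have conj : ∀ P Q u : S, P * u = u * Q → ω P * u = u * ω Q := by
    intro P Q u hPQ
    obtain ⟨N, h1, h2⟩ := common P Q
    rw [← h1, ← h2, pw_conj P Q u hPQ N]
  have shift : ∀ a u : S, ω (u * a) * u = u * ω (a * u) := by
    intro a u
    exact conj _ _ _ (mul_assoc u a u)
  -- shifted identity
  have h' : ∀ a b u : S,
      ω (ω (u * a) * ω (u * b)) * u = ω (ω (u * b) * ω (u * a)) * u := by
    intro a b u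
    have key : ∀ a b : S,
        (ω (u * a) * ω (u * b)) * u = u * (ω (a * u) * ω (b * u)) := by
      intro a b
      rw [mul_assoc, shift, ← mul_assoc, shift, mul_assoc]
    rw [conj _ _ u (key a b), conj _ _ u (key b a), h a b u]
  intro s x y t
  -- Step A : t * e = t * f
  have hA : t * ω (ω (s * x * t) * ω (s * y * t))
      = t * ω (ω (s * y * t) * ω (s * x * t)) := h (s * x) (s * y) t
  -- Step B : e * s = f * s
  have hB : ω (ω (s * x * t) * ω (s * y * t)) * s
      = ω (ω (s * y * t) * ω (s * x * t)) * s := by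
    have H := h' (x * t) (y * t) s
    rw [← mul_assoc s x t, ← mul_assoc s y t] at H
    exact H
  -- e ends with t
  obtain ⟨m, hm⟩ := hωpow (s * y * t)
  obtain ⟨c, hc⟩ := pw_last (s * y) t m
  have hvt : ω (s * y * t) = c * t := by rw [hm]; exact hc
  obtain ⟨N, hN⟩ := hωpow (ω (s * x * t) * ω (s * y * t))
  have hZ : ω (s * x * t) * ω (s * y * t) = (ω (s * x * t) * c) * t := by
    rw [hvt]; exact (mul_assoc _ c t).symm
  obtain ⟨W, hW⟩ := pw_last (ω (s * x * t) * c) t N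
  have hWe : ω (ω (s * x * t) * ω (s * y * t)) = W * t := by
    rw [hN, hZ, hW]
  -- f starts with s
  obtain ⟨c', hc'⟩ := pw_first s (y * t) m
  have hvs : ω (s * y * t) = s * c' := by rw [hm, mul_assoc]; exact hc'
  obtain ⟨N', hN'⟩ := hωpow (ω (s * y * t) * ω (s * x * t))
  have hZ' : ω (s * y * t) * ω (s * x * t) = s * (c' * ω (s * x * t)) := by
    rw [hvs]; exact mul_assoc s c' _
  obtain ⟨M, hM⟩ := pw_first s (c' * ω (s * x * t)) N'
  have hfM : ω (ω (s * y * t) * ω (s * x * t)) = s * M := by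
    rw [hN', hZ', hM]
  -- Step C : e * f = e
  have hC : ω (ω (s * x * t) * ω (s * y * t)) * ω (ω (s * y * t) * ω (s * x * t))
      = ω (ω (s * x * t) * ω (s * y * t)) := by
    rw [hWe, mul_assoc, ← hA, ← mul_assoc, ← hWe]
    exact hωid _
  -- Step D : e * f = f
  have hD : ω (ω (s * x * t) * ω (s * y * t)) * ω (ω (s * y * t) * ω (s * x * t))
      = ω (ω (s * y * t) * ω (s * x * t)) := by
    rw [hfM, ← mul_assoc, hB, mul_assoc, ← hfM]
    exact hωid _
  exact hC.symm.trans hD
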